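/- arXiv:2504.14343 — 5 statements merged into one kernel-verified Lean document; each statement's English description precedes it below -/
import Mathlib

section
/- For every probability measure ν on ℝ × ℝ carried by ℝ × [0,∞) whose second coordinate is integrable with mean M₁ = ∫ v dν(y,v), the regularised leverage ratio x ↦ F(x,ν) is Lipschitz continuous on ℝ with explicit constant: |F(x₁,ν) − F(x₂,ν)| ≤ (L_K/(ε·δ))·(1 + (A₂+δ)·M₁/δ)·|x₁ − x₂| for all x₁, x₂ ∈ ℝ. -/
open MeasureTheory

/-- The regularised leverage ratio. -/
noncomputable def Fratio (ε δ : ℝ) (K : ℝ → ℝ) (ν : Measure (ℝ × ℝ)) (x : ℝ) : ℝ :=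
  ((∫ p, K ((p.1 - x) / ε) ∂ν) + δ) / ((∫ p, p.2 * K ((p.1 - x) / ε) ∂ν) + δ)

/-- Lipschitz continuity of `x ↦ F(x,ν)` with explicit constant
`(L_K/(ε·δ))·(1 + (A₂+δ)·M₁/δ)`. -/
theorem stmt_4 (ε δ A₂ L_K : ℝ) (hε : 0 < ε) (hδ : 0 < δ) (hA₂ : 0 < A₂) (hLK : 0 < L_K)
    (K : ℝ → ℝ) (hK_nonneg : ∀ u, 0 ≤ K u) (hK_bdd : ∀ u, K u ≤ A₂)
    (hK_lip : ∀ u u', |K u - K u'| ≤ L_K * |u - u'|)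
    (ν : Measure (ℝ × ℝ)) [IsProbabilityMeasure ν]
    (hsupp : ∀ᵐ p ∂ν, 0 ≤ p.2)
    (hint : Integrable (fun p : ℝ × ℝ => p.2) ν)
    (M₁ : ℝ) (hM₁ : M₁ = ∫ p, p.2 ∂ν) :
    ∀ x₁ x₂ : ℝ,
      |Fratio ε δ K ν x₁ - Fratio ε δ K ν x₂| ≤
        (L_K / (ε * δ)) * (1 + (A₂ + δ) * M₁ / δ) * |x₁ - x₂| := by
  have hKcont : Continuous K := by
    have hlip : LipschitzWith (Real.toNNReal L_K) K := by
      refine LipschitzWith.of_dist_le_mul fun u u' => ?_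
      rw [Real.dist_eq, Real.dist_eq, Real.coe_toNNReal _ hLK.le]
      exact hK_lip u u'
    exact hlip.continuous
  intro x₁ x₂
  have habsint : ∀ f : ℝ × ℝ → ℝ, |∫ p, f p ∂ν| ≤ ∫ p, |f p| ∂ν := fun f => by
    simpa [Real.norm_eq_abs] using norm_integral_le_integral_norm (μ := ν) f
  set g : ℝ → ℝ × ℝ → ℝ := fun x p => K ((p.1 - x) / ε) with hg
  have hgmeas : ∀ x, AEStronglyMeasurable (g x) ν := fun x =>
    (hKcont.comp ((continuous_fst.sub continuous_const).div_const ε)).aestronglyMeasurable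
  have hgint : ∀ x, Integrable (g x) ν := by
    intro x
    refine (integrable_const A₂).mono' (hgmeas x) ?_
    filter_upwards with p
    rw [Real.norm_eq_abs, abs_of_nonneg (hK_nonneg _)]
    exact hK_bdd _
  have hvgint : ∀ x, Integrable (fun p => p.2 * g x p) ν := by
    intro x
    exact (hint.bdd_mul (c := A₂) (hgmeas x) (Filter.Eventually.of_forall fun p => by
      rw [Real.norm_eq_abs, abs_of_nonneg (hK_nonneg _)]; exact hK_bdd _)).congr
      (by filter_upwards with p using mul_comm _ _)
  set N : ℝ → ℝ := fun x => (∫ p, g x p ∂ν) + δ with hN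
  set D : ℝ → ℝ := fun x => (∫ p, p.2 * g x p ∂ν) + δ with hD
  have hNδ : ∀ x, δ ≤ N x := by
    intro x
    have : 0 ≤ ∫ p, g x p ∂ν := integral_nonneg fun p => hK_nonneg _
    simp only [hN]; linarith
  have hNle : ∀ x, N x ≤ A₂ + δ := by
    intro x
    have h : (∫ p, g x p ∂ν) ≤ ∫ _, A₂ ∂ν :=
      integral_mono (hgint x) (integrable_const A₂) fun p => hK_bdd _
    simp [integral_const] at h
    simp only [hN]; linarith
  have hDδ : ∀ x, δ ≤ D x := by
    intro x
    have : 0 ≤ ∫ p, p.2 * g x p ∂ν := by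
      refine integral_nonneg_of_ae ?_
      filter_upwards [hsupp] with p hp using mul_nonneg hp (hK_nonneg _)
    simp only [hD]; linarith
  have hptwise : ∀ p : ℝ × ℝ, |g x₁ p - g x₂ p| ≤ L_K * |x₁ - x₂| / ε := by
    intro p
    calc |g x₁ p - g x₂ p| ≤ L_K * |(p.1 - x₁) / ε - (p.1 - x₂) / ε| := hK_lip _ _
      _ = L_K * |x₁ - x₂| / ε := by
          rw [div_sub_div_same, mul_div_assoc, abs_div, abs_of_pos hε]
          have : p.1 - x₁ - (p.1 - x₂) = -(x₁ - x₂) := by ring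
          rw [this, abs_neg]
  have hNdiff : |N x₁ - N x₂| ≤ L_K * |x₁ - x₂| / ε := by
    have heq : N x₁ - N x₂ = ∫ p, (g x₁ p - g x₂ p) ∂ν := by
      rw [integral_sub (hgint x₁) (hgint x₂)]; simp [hN]
    rw [heq]
    calc |∫ p, (g x₁ p - g x₂ p) ∂ν| ≤ ∫ p, |g x₁ p - g x₂ p| ∂ν :=
          habsint _
      _ ≤ ∫ _, L_K * |x₁ - x₂| / ε ∂ν :=
          integral_mono ((hgint x₁).sub (hgint x₂)).abs (integrable_const _)
            fun p => hptwise p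
      _ = L_K * |x₁ - x₂| / ε := by simp
  have hM₁nonneg : 0 ≤ M₁ := by
    rw [hM₁]; exact integral_nonneg_of_ae hsupp
  have hDdiff : |D x₁ - D x₂| ≤ L_K * |x₁ - x₂| / ε * M₁ := by
    have heq : D x₁ - D x₂ = ∫ p, (p.2 * g x₁ p - p.2 * g x₂ p) ∂ν := by
      rw [integral_sub (hvgint x₁) (hvgint x₂)]; simp [hD]
    rw [heq]
    calc |∫ p, (p.2 * g x₁ p - p.2 * g x₂ p) ∂ν|
        ≤ ∫ p, |p.2 * g x₁ p - p.2 * g x₂ p| ∂ν := habsint _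
      _ ≤ ∫ p, p.2 * (L_K * |x₁ - x₂| / ε) ∂ν := by
          refine integral_mono_ae ((hvgint x₁).sub (hvgint x₂)).abs
            (hint.mul_const _) ?_
          filter_upwards [hsupp] with p hp
          rw [← mul_sub, abs_mul, abs_of_nonneg hp]
          exact mul_le_mul_of_nonneg_left (hptwise p) hp
      _ = L_K * |x₁ - x₂| / ε * M₁ := by
          rw [integral_mul_const, hM₁]; ring
  have hD1 : (0:ℝ) < D x₁ := lt_of_lt_of_le hδ (hDδ x₁)
  have hD2 : (0:ℝ) < D x₂ := lt_of_lt_of_le hδ (hDδ x₂)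
  have hFr : ∀ x, Fratio ε δ K ν x = N x / D x := fun x => rfl
  rw [hFr x₁, hFr x₂]
  have key : N x₁ / D x₁ - N x₂ / D x₂
      = (N x₁ - N x₂) / D x₁ + N x₂ * (D x₂ - D x₁) / (D x₁ * D x₂) := by
    field_simp
    ring
  rw [key]
  have h1 : |(N x₁ - N x₂) / D x₁| ≤ (L_K * |x₁ - x₂| / ε) / δ := by
    rw [abs_div, abs_of_pos hD1]
    exact div_le_div₀ (by positivity) hNdiff hδ (hDδ x₁)
  have h2 : |N x₂ * (D x₂ - D x₁) / (D x₁ * D x₂)|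
      ≤ (A₂ + δ) * (L_K * |x₁ - x₂| / ε * M₁) / (δ * δ) := by
    rw [abs_div, abs_mul, abs_of_pos (mul_pos hD1 hD2)]
    refine div_le_div₀ (by positivity) ?_ (by positivity) ?_
    · refine mul_le_mul ?_ ?_ (abs_nonneg _) (by positivity)
      · rw [abs_of_pos (lt_of_lt_of_le hδ (hNδ x₂))]; exact hNle x₂
      · rw [abs_sub_comm]; exact hDdiff
    · exact mul_le_mul (hDδ x₁) (hDδ x₂) hδ.le hD1.le
  calc |(N x₁ - N x₂) / D x₁ + N x₂ * (D x₂ - D x₁) / (D x₁ * D x₂)|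
      ≤ |(N x₁ - N x₂) / D x₁| + |N x₂ * (D x₂ - D x₁) / (D x₁ * D x₂)| := abs_add_le _ _
    _ ≤ (L_K * |x₁ - x₂| / ε) / δ + (A₂ + δ) * (L_K * |x₁ - x₂| / ε * M₁) / (δ * δ) :=
        add_le_add h1 h2
    _ = (L_K / (ε * δ)) * (1 + (A₂ + δ) * M₁ / δ) * |x₁ - x₂| := by
        field_simp
end

section
/- For every probability measure ν on ℝ × ℝ carried by ℝ × [0,∞) whose second coordinate is integrable with mean M₁ = ∫ v dν(y,v), there exists a constant L > 0, depending only on ε, δ, A₁, A₂, L_K, L_Dup and M₁, such that for all t₁, t₂, x₁, x₂ ∈ ℝ: |σ̃(t₁,x₁,ν) − σ̃(t₂,x₂,ν)| ≤ L·(|t₁−t₂|^{1/2} + |x₁−x₂|); that is, σ̃ is 1/2-Hölder continuous in time and Lipschitz continuous in the state variable, uniformly for the fixed measure ν. -/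
open MeasureTheory

/-- `σ̃(t,x,ν) = D(t,x)·√(F(x,ν))`. -/
noncomputable def sigmaT (ε δ : ℝ) (K : ℝ → ℝ) (D : ℝ → ℝ → ℝ)
    (t x : ℝ) (ν : Measure (ℝ × ℝ)) : ℝ :=
  D t x * Real.sqrt (Fratio ε δ K ν x)

/-- Square-root is Lipschitz above a positive level. -/
lemma sqrt_lip_aux {m a b : ℝ} (hm : 0 < m) (ha : m ≤ a) (hb : m ≤ b) :
    |Real.sqrt a - Real.sqrt b| ≤ |a - b| / (2 * Real.sqrt m) := by
  have hsm : 0 < Real.sqrt m := Real.sqrt_pos.mpr hm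
  have ha0 : 0 ≤ a := hm.le.trans ha
  have hb0 : 0 ≤ b := hm.le.trans hb
  have h1 : Real.sqrt m ≤ Real.sqrt a := Real.sqrt_le_sqrt ha
  have h2 : Real.sqrt m ≤ Real.sqrt b := Real.sqrt_le_sqrt hb
  have hprod : |Real.sqrt a - Real.sqrt b| * (Real.sqrt a + Real.sqrt b) = |a - b| := by
    rw [← abs_of_nonneg (by positivity : (0:ℝ) ≤ Real.sqrt a + Real.sqrt b), ← abs_mul]
    congr 1
    have hsa := Real.sq_sqrt ha0
    have hsb := Real.sq_sqrt hb0
    nlinarith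
  rw [le_div_iff₀ (by positivity)]
  calc |Real.sqrt a - Real.sqrt b| * (2 * Real.sqrt m)
      ≤ |Real.sqrt a - Real.sqrt b| * (Real.sqrt a + Real.sqrt b) := by
        apply mul_le_mul_of_nonneg_left (by linarith) (abs_nonneg _)
    _ = |a - b| := hprod

/-- `σ̃` is `1/2`-Hölder in time and Lipschitz in the state variable,
uniformly for a fixed measure `ν`. -/
theorem stmt_5 (ε δ A₁ A₂ L_K L_Dup : ℝ) (hε : 0 < ε) (hδ : 0 < δ)
    (hA₁ : 0 < A₁) (hA₂ : 0 < A₂) (hLK : 0 < L_K) (hLDup : 0 < L_Dup)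
    (K : ℝ → ℝ) (hK_nonneg : ∀ u, 0 ≤ K u) (hK_bdd : ∀ u, K u ≤ A₂)
    (hK_lip : ∀ u u', |K u - K u'| ≤ L_K * |u - u'|)
    (D : ℝ → ℝ → ℝ) (hD_bdd : ∀ t x, |D t x| ≤ A₁)
    (hD_lip : ∀ t₁ x₁ t₂ x₂,
      |D t₁ x₁ - D t₂ x₂| ≤ L_Dup * (|t₁ - t₂| ^ ((1 : ℝ) / 2) + |x₁ - x₂|))
    (ν : Measure (ℝ × ℝ)) [IsProbabilityMeasure ν]
    (hsupp : ∀ᵐ p ∂ν, 0 ≤ p.2)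
    (hint : Integrable (fun p : ℝ × ℝ => p.2) ν)
    (M₁ : ℝ) (hM₁ : M₁ = ∫ p, p.2 ∂ν) :
    ∃ L : ℝ, 0 < L ∧ ∀ t₁ t₂ x₁ x₂ : ℝ,
      |sigmaT ε δ K D t₁ x₁ ν - sigmaT ε δ K D t₂ x₂ ν| ≤
        L * (|t₁ - t₂| ^ ((1 : ℝ) / 2) + |x₁ - x₂|) := by
  -- Basic facts
  have hM₁0 : 0 ≤ M₁ := hM₁ ▸ integral_nonneg_of_ae hsupp
  have hKcont : Continuous K := by
    have : LipschitzWith (Real.toNNReal L_K) K := by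
      apply LipschitzWith.of_dist_le_mul
      intro u u'
      rw [Real.dist_eq, Real.dist_eq, Real.coe_toNNReal _ hLK.le]
      exact hK_lip u u'
    exact this.continuous
  -- Abbreviations
  set N : ℝ → ℝ := fun x => ∫ p, K ((p.1 - x) / ε) ∂ν with hN
  set W : ℝ → ℝ := fun x => ∫ p, p.2 * K ((p.1 - x) / ε) ∂ν with hW
  have hFr : ∀ x, Fratio ε δ K ν x = (N x + δ) / (W x + δ) := fun x => rfl
  have hcont : ∀ x : ℝ, Continuous (fun p : ℝ × ℝ => K ((p.1 - x) / ε)) := by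
    intro x; exact hKcont.comp ((continuous_fst.sub continuous_const).div_const ε)
  have hintK : ∀ x, Integrable (fun p : ℝ × ℝ => K ((p.1 - x) / ε)) ν := by
    intro x
    refine (integrable_const A₂).mono' (hcont x).aestronglyMeasurable ?_
    filter_upwards with p
    rw [Real.norm_eq_abs, abs_of_nonneg (hK_nonneg _)]
    exact hK_bdd _
  have hintW : ∀ x, Integrable (fun p : ℝ × ℝ => p.2 * K ((p.1 - x) / ε)) ν := by
    intro x
    have := hint.bdd_mul (hcont x).aestronglyMeasurable
      (c := A₂) (Filter.Eventually.of_forall fun p => by rw [Real.norm_eq_abs, abs_of_nonneg (hK_nonneg _)]; exact hK_bdd _)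
    simpa [mul_comm] using this
  -- Bounds on N and W
  have hN0 : ∀ x, 0 ≤ N x := fun x => integral_nonneg fun p => hK_nonneg _
  have hNA : ∀ x, N x ≤ A₂ := by
    intro x
    calc N x ≤ ∫ _, A₂ ∂ν := integral_mono (hintK x) (integrable_const A₂) fun p => hK_bdd _
      _ = A₂ := by simp
  have hW0 : ∀ x, 0 ≤ W x := by
    intro x
    refine integral_nonneg_of_ae ?_
    filter_upwards [hsupp] with p hp
    exact mul_nonneg hp (hK_nonneg _)
  have hWA : ∀ x, W x ≤ A₂ * M₁ := by
    intro x
    have : W x ≤ ∫ p, A₂ * p.2 ∂ν := by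
      refine integral_mono_ae (hintW x) (hint.const_mul A₂) ?_
      filter_upwards [hsupp] with p hp
      calc p.2 * K ((p.1 - x) / ε) ≤ p.2 * A₂ := mul_le_mul_of_nonneg_left (hK_bdd _) hp
        _ = A₂ * p.2 := mul_comm _ _
    simpa [integral_const_mul, ← hM₁] using this
  -- Lipschitz estimates for N and W
  have hKlipx : ∀ (x x' : ℝ) (p : ℝ × ℝ),
      |K ((p.1 - x) / ε) - K ((p.1 - x') / ε)| ≤ L_K / ε * |x - x'| := by
    intro x x' p
    calc |K ((p.1 - x) / ε) - K ((p.1 - x') / ε)|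
        ≤ L_K * |(p.1 - x) / ε - (p.1 - x') / ε| := hK_lip _ _
      _ = L_K / ε * |x - x'| := by
          rw [div_sub_div_same, show p.1 - x - (p.1 - x') = -(x - x') by ring, abs_div,
            abs_neg, abs_of_pos hε]
          ring
  have hNlip : ∀ x x', |N x - N x'| ≤ L_K / ε * |x - x'| := by
    intro x x'
    rw [hN]
    simp only
    rw [← integral_sub (hintK x) (hintK x')]
    have := norm_integral_le_of_norm_le_const (μ := ν)
      (f := fun p : ℝ × ℝ => K ((p.1 - x) / ε) - K ((p.1 - x') / ε))
      (C := L_K / ε * |x - x'|) (Filter.Eventually.of_forall fun p => by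
        rw [Real.norm_eq_abs]; exact hKlipx x x' p)
    simpa using this
  have hWlip : ∀ x x', |W x - W x'| ≤ L_K / ε * M₁ * |x - x'| := by
    intro x x'
    rw [hW]
    simp only
    rw [← integral_sub (hintW x) (hintW x')]
    have habs : |∫ p, (p.2 * K ((p.1 - x) / ε) - p.2 * K ((p.1 - x') / ε)) ∂ν|
        ≤ ∫ p, |p.2 * K ((p.1 - x) / ε) - p.2 * K ((p.1 - x') / ε)| ∂ν :=
      by simpa [Real.norm_eq_abs] using
        norm_integral_le_integral_norm
          (fun p : ℝ × ℝ => p.2 * K ((p.1 - x) / ε) - p.2 * K ((p.1 - x') / ε)) (μ := ν)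
    refine habs.trans ?_
    have : (∫ p, |p.2 * K ((p.1 - x) / ε) - p.2 * K ((p.1 - x') / ε)| ∂ν)
        ≤ ∫ p, (L_K / ε * |x - x'|) * p.2 ∂ν := by
      refine integral_mono_ae ((hintW x).sub (hintW x')).abs (hint.const_mul _) ?_
      filter_upwards [hsupp] with p hp
      rw [← mul_sub, abs_mul, abs_of_nonneg hp]
      calc p.2 * |K ((p.1 - x) / ε) - K ((p.1 - x') / ε)|
          ≤ p.2 * (L_K / ε * |x - x'|) := mul_le_mul_of_nonneg_left (hKlipx x x' p) hp
        _ = (L_K / ε * |x - x'|) * p.2 := mul_comm _ _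
    refine this.trans ?_
    rw [integral_const_mul, ← hM₁]
    ring_nf
    exact le_refl _
  -- Bounds on Fratio
  have hWden : ∀ x, δ ≤ W x + δ := fun x => le_add_of_nonneg_left (hW0 x)
  have hWdenpos : ∀ x, 0 < W x + δ := fun x => lt_of_lt_of_le hδ (hWden x)
  set m : ℝ := δ / (A₂ * M₁ + δ) with hm
  have hmpos : 0 < m := by positivity
  have hFlo : ∀ x, m ≤ Fratio ε δ K ν x := by
    intro x
    rw [hFr, hm]
    exact div_le_div₀ (by linarith [hN0 x]) (by linarith [hN0 x]) (hWdenpos x)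
      (by linarith [hWA x])
  set Fmax : ℝ := (A₂ + δ) / δ with hFmax
  have hFhi : ∀ x, Fratio ε δ K ν x ≤ Fmax := by
    intro x
    rw [hFr, hFmax]
    exact div_le_div₀ (by linarith) (by linarith [hNA x]) hδ (hWden x)
  -- Lipschitz estimate for Fratio
  set C_F : ℝ := (L_K / ε * (A₂ * M₁ + δ) + (A₂ + δ) * (L_K / ε * M₁)) / (δ * δ) with hCF
  have hCFpos : 0 < C_F := by
    have h1 : 0 < L_K / ε := by positivity
    have h2 : 0 < A₂ * M₁ + δ := by positivity
    have h3 : 0 ≤ L_K / ε * M₁ := by positivity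
    rw [hCF]
    positivity
  have hFlip : ∀ x x', |Fratio ε δ K ν x - Fratio ε δ K ν x'| ≤ C_F * |x - x'| := by
    intro x x'
    rw [hFr, hFr]
    have hkey : (N x + δ) / (W x + δ) - (N x' + δ) / (W x' + δ)
        = ((N x - N x') * (W x' + δ) + (N x' + δ) * (W x' - W x))
          / ((W x + δ) * (W x' + δ)) := by
      rw [div_sub_div _ _ (hWdenpos x).ne' (hWdenpos x').ne']
      congr 1
      ring
    rw [hkey, abs_div]
    rw [abs_of_pos (mul_pos (hWdenpos x) (hWdenpos x'))]
    have hden : δ * δ ≤ (W x + δ) * (W x' + δ) :=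
      mul_le_mul (hWden x) (hWden x') hδ.le (by linarith [hWdenpos x])
    have hnum : |(N x - N x') * (W x' + δ) + (N x' + δ) * (W x' - W x)|
        ≤ (L_K / ε * (A₂ * M₁ + δ) + (A₂ + δ) * (L_K / ε * M₁)) * |x - x'| := by
      calc |(N x - N x') * (W x' + δ) + (N x' + δ) * (W x' - W x)|
          ≤ |(N x - N x') * (W x' + δ)| + |(N x' + δ) * (W x' - W x)| := abs_add_le _ _
        _ = |N x - N x'| * (W x' + δ) + (N x' + δ) * |W x' - W x| := by
            rw [abs_mul, abs_mul, abs_of_pos (hWdenpos x'),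
              abs_of_pos (by linarith [hN0 x'] : (0:ℝ) < N x' + δ)]
        _ ≤ (L_K / ε * |x - x'|) * (A₂ * M₁ + δ)
            + (A₂ + δ) * (L_K / ε * M₁ * |x - x'|) := by
            have e1 : |N x - N x'| * (W x' + δ) ≤ (L_K / ε * |x - x'|) * (A₂ * M₁ + δ) :=
              mul_le_mul (hNlip x x') (by linarith [hWA x']) (by linarith [hWdenpos x'])
                (by positivity)
            have e2 : (N x' + δ) * |W x' - W x| ≤ (A₂ + δ) * (L_K / ε * M₁ * |x - x'|) := by
              refine mul_le_mul (by linarith [hNA x']) ?_ (abs_nonneg _) (by positivity)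
              have := hWlip x' x
              simpa [abs_sub_comm] using this
            linarith
        _ = (L_K / ε * (A₂ * M₁ + δ) + (A₂ + δ) * (L_K / ε * M₁)) * |x - x'| := by ring
    calc |(N x - N x') * (W x' + δ) + (N x' + δ) * (W x' - W x)| / ((W x + δ) * (W x' + δ))
        ≤ ((L_K / ε * (A₂ * M₁ + δ) + (A₂ + δ) * (L_K / ε * M₁)) * |x - x'|) / (δ * δ) :=
          div_le_div₀ (by positivity) hnum (by positivity) hden
      _ = C_F * |x - x'| := by rw [hCF]; ring
  -- Put everything together
  have hsm : 0 < Real.sqrt m := Real.sqrt_pos.mpr hmpos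
  refine ⟨L_Dup * Real.sqrt Fmax + A₁ * C_F / (2 * Real.sqrt m) + 1, by positivity, ?_⟩
  intro t₁ t₂ x₁ x₂
  set R : ℝ := |t₁ - t₂| ^ ((1 : ℝ) / 2) + |x₁ - x₂| with hR
  have hR0 : 0 ≤ R := by
    rw [hR]
    have : (0:ℝ) ≤ |t₁ - t₂| ^ ((1 : ℝ) / 2) := Real.rpow_nonneg (abs_nonneg _) _
    linarith [abs_nonneg (x₁ - x₂)]
  have hx12 : |x₁ - x₂| ≤ R := by
    rw [hR]
    have : (0:ℝ) ≤ |t₁ - t₂| ^ ((1 : ℝ) / 2) := Real.rpow_nonneg (abs_nonneg _) _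
    linarith
  have hsplit : sigmaT ε δ K D t₁ x₁ ν - sigmaT ε δ K D t₂ x₂ ν
      = (D t₁ x₁ - D t₂ x₂) * Real.sqrt (Fratio ε δ K ν x₁)
        + D t₂ x₂ * (Real.sqrt (Fratio ε δ K ν x₁) - Real.sqrt (Fratio ε δ K ν x₂)) := by
    simp only [sigmaT]; ring
  rw [hsplit]
  have hsq1 : Real.sqrt (Fratio ε δ K ν x₁) ≤ Real.sqrt Fmax := Real.sqrt_le_sqrt (hFhi x₁)
  have hterm1 : |(D t₁ x₁ - D t₂ x₂) * Real.sqrt (Fratio ε δ K ν x₁)|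
      ≤ L_Dup * Real.sqrt Fmax * R := by
    rw [abs_mul, abs_of_nonneg (Real.sqrt_nonneg _)]
    calc |D t₁ x₁ - D t₂ x₂| * Real.sqrt (Fratio ε δ K ν x₁)
        ≤ (L_Dup * R) * Real.sqrt Fmax := by
          exact mul_le_mul (hD_lip t₁ x₁ t₂ x₂) hsq1 (Real.sqrt_nonneg _) (by positivity)
      _ = L_Dup * Real.sqrt Fmax * R := by ring
  have hterm2 : |D t₂ x₂ * (Real.sqrt (Fratio ε δ K ν x₁) - Real.sqrt (Fratio ε δ K ν x₂))|
      ≤ A₁ * C_F / (2 * Real.sqrt m) * R := by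
    rw [abs_mul]
    have hs : |Real.sqrt (Fratio ε δ K ν x₁) - Real.sqrt (Fratio ε δ K ν x₂)|
        ≤ C_F * |x₁ - x₂| / (2 * Real.sqrt m) := by
      refine (sqrt_lip_aux hmpos (hFlo x₁) (hFlo x₂)).trans ?_
      gcongr
      exact hFlip x₁ x₂
    calc |D t₂ x₂| * |Real.sqrt (Fratio ε δ K ν x₁) - Real.sqrt (Fratio ε δ K ν x₂)|
        ≤ A₁ * (C_F * |x₁ - x₂| / (2 * Real.sqrt m)) :=
          mul_le_mul (hD_bdd t₂ x₂) hs (abs_nonneg _) hA₁.le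
      _ = A₁ * C_F / (2 * Real.sqrt m) * |x₁ - x₂| := by ring
      _ ≤ A₁ * C_F / (2 * Real.sqrt m) * R := by
          exact mul_le_mul_of_nonneg_left hx12 (by positivity)
  calc |(D t₁ x₁ - D t₂ x₂) * Real.sqrt (Fratio ε δ K ν x₁)
        + D t₂ x₂ * (Real.sqrt (Fratio ε δ K ν x₁) - Real.sqrt (Fratio ε δ K ν x₂))|
      ≤ |(D t₁ x₁ - D t₂ x₂) * Real.sqrt (Fratio ε δ K ν x₁)|
        + |D t₂ x₂ * (Real.sqrt (Fratio ε δ K ν x₁) - Real.sqrt (Fratio ε δ K ν x₂))| :=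
        abs_add_le _ _
    _ ≤ L_Dup * Real.sqrt Fmax * R + A₁ * C_F / (2 * Real.sqrt m) * R :=
        add_le_add hterm1 hterm2
    _ = (L_Dup * Real.sqrt Fmax + A₁ * C_F / (2 * Real.sqrt m)) * R := by ring
    _ ≤ (L_Dup * Real.sqrt Fmax + A₁ * C_F / (2 * Real.sqrt m) + 1) * R :=
        mul_le_mul_of_nonneg_right (by simp) hR0
end

section
/- For every probability measure ν on ℝ × ℝ carried by ℝ × [0,∞) whose second coordinate is integrable with mean M₁ = ∫ v dν(y,v), there exists a constant L > 0, depending only on ε, δ, A₁, A₂, L_K, L_Dup and M₁, such that for all t₁, t₂, x₁, x₂ ∈ ℝ: |β̃(t₁,x₁,ν) − β̃(t₂,x₂,ν)| ≤ L·(|t₁−t₂|^{1/2} + |x₁−x₂|); that is, β̃ is 1/2-Hölder continuous in time and Lipschitz continuous in the state variable, uniformly for the fixed measure ν. -/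
open MeasureTheory

/-- `β̃(t,x,ν) = −(1/2)·D(t,x)²·F(x,ν)`. -/
noncomputable def betaT (ε δ : ℝ) (K : ℝ → ℝ) (D : ℝ → ℝ → ℝ)
    (t x : ℝ) (ν : Measure (ℝ × ℝ)) : ℝ :=
  -(1 / 2) * (D t x) ^ 2 * Fratio ε δ K ν x

/-- `β̃` is `1/2`-Hölder in time and Lipschitz in the state variable,
uniformly for a fixed measure `ν`. -/
theorem stmt_6 (ε δ A₁ A₂ L_K L_Dup : ℝ) (hε : 0 < ε) (hδ : 0 < δ)
    (hA₁ : 0 < A₁) (hA₂ : 0 < A₂) (hLK : 0 < L_K) (hLDup : 0 < L_Dup)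
    (K : ℝ → ℝ) (hK_nonneg : ∀ u, 0 ≤ K u) (hK_bdd : ∀ u, K u ≤ A₂)
    (hK_lip : ∀ u u', |K u - K u'| ≤ L_K * |u - u'|)
    (D : ℝ → ℝ → ℝ) (hD_bdd : ∀ t x, |D t x| ≤ A₁)
    (hD_lip : ∀ t₁ x₁ t₂ x₂,
      |D t₁ x₁ - D t₂ x₂| ≤ L_Dup * (|t₁ - t₂| ^ ((1 : ℝ) / 2) + |x₁ - x₂|))
    (ν : Measure (ℝ × ℝ)) [IsProbabilityMeasure ν]
    (hsupp : ∀ᵐ p ∂ν, 0 ≤ p.2)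
    (hint : Integrable (fun p : ℝ × ℝ => p.2) ν)
    (M₁ : ℝ) (hM₁ : M₁ = ∫ p, p.2 ∂ν) :
    ∃ L : ℝ, 0 < L ∧ ∀ t₁ t₂ x₁ x₂ : ℝ,
      |betaT ε δ K D t₁ x₁ ν - betaT ε δ K D t₂ x₂ ν| ≤
        L * (|t₁ - t₂| ^ ((1 : ℝ) / 2) + |x₁ - x₂|) := by
  -- K is continuous
  have hKcont : Continuous K := by
    have hlip : LipschitzWith (Real.toNNReal L_K) K := by
      apply LipschitzWith.of_dist_le_mul
      intro u u'
      simp only [Real.dist_eq]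
      calc |K u - K u'| ≤ L_K * |u - u'| := hK_lip u u'
        _ ≤ (Real.toNNReal L_K : ℝ) * |u - u'| := by
            gcongr
            exact Real.le_coe_toNNReal L_K
    exact hlip.continuous
  have hM₁_nonneg : 0 ≤ M₁ := hM₁ ▸ integral_nonneg_of_ae hsupp
  set N : ℝ → ℝ := fun x => ∫ p, K ((p.1 - x) / ε) ∂ν with hN
  set Dn : ℝ → ℝ := fun x => ∫ p, p.2 * K ((p.1 - x) / ε) ∂ν with hDn
  have haesm : ∀ x, AEStronglyMeasurable (fun p : ℝ × ℝ => K ((p.1 - x) / ε)) ν := fun x =>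
    (hKcont.comp ((continuous_fst.sub continuous_const).div_const ε)).aestronglyMeasurable
  have hintN : ∀ x, Integrable (fun p : ℝ × ℝ => K ((p.1 - x) / ε)) ν := fun x =>
    (integrable_const A₂).mono' (haesm x) (Filter.Eventually.of_forall fun p => by
      rw [Real.norm_eq_abs, abs_of_nonneg (hK_nonneg _)]; exact hK_bdd _)
  have hintD : ∀ x, Integrable (fun p : ℝ × ℝ => p.2 * K ((p.1 - x) / ε)) ν := fun x =>
    (hint.abs.const_mul A₂).mono' (hint.aestronglyMeasurable.mul (haesm x))
      (Filter.Eventually.of_forall fun p => by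
        rw [Real.norm_eq_abs, abs_mul]
        calc |p.2| * |K ((p.1 - x) / ε)| ≤ |p.2| * A₂ := by
              gcongr
              rw [abs_of_nonneg (hK_nonneg _)]; exact hK_bdd _
          _ = A₂ * |p.2| := mul_comm _ _)
  have hN_nonneg : ∀ x, 0 ≤ N x := fun x => integral_nonneg fun p => hK_nonneg _
  have hN_le : ∀ x, N x ≤ A₂ := fun x => by
    calc N x ≤ ∫ _p, A₂ ∂ν := integral_mono (hintN x) (integrable_const _) fun p => hK_bdd _
      _ = A₂ := by simp
  have hDn_nonneg : ∀ x, 0 ≤ Dn x := fun x =>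
    integral_nonneg_of_ae (hsupp.mono fun p hp => mul_nonneg hp (hK_nonneg _))
  have hDn_le : ∀ x, Dn x ≤ A₂ * M₁ := fun x => by
    have : Dn x ≤ ∫ p, A₂ * p.2 ∂ν := by
      refine integral_mono_ae (hintD x) (hint.const_mul A₂)
        (hsupp.mono fun p hp => ?_)
      calc p.2 * K ((p.1 - x) / ε) ≤ p.2 * A₂ := by
            exact mul_le_mul_of_nonneg_left (hK_bdd _) hp
        _ = A₂ * p.2 := mul_comm _ _
    rwa [integral_const_mul, ← hM₁] at this
  -- pointwise Lipschitz estimate for the kernel terms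
  have hK_pt : ∀ (y x₁ x₂ : ℝ),
      |K ((y - x₁) / ε) - K ((y - x₂) / ε)| ≤ L_K / ε * |x₁ - x₂| := by
    intro y x₁ x₂
    calc |K ((y - x₁) / ε) - K ((y - x₂) / ε)|
        ≤ L_K * |(y - x₁) / ε - (y - x₂) / ε| := hK_lip _ _
      _ = L_K / ε * |x₁ - x₂| := by
          rw [div_sub_div_same, abs_div, abs_of_pos hε]
          have h1 : y - x₁ - (y - x₂) = -(x₁ - x₂) := by ring
          rw [h1, abs_neg]
          ring
  have hN_lip : ∀ x₁ x₂, |N x₁ - N x₂| ≤ L_K / ε * |x₁ - x₂| := by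
    intro x₁ x₂
    have heq : N x₁ - N x₂ =
        ∫ p, (K ((p.1 - x₁) / ε) - K ((p.1 - x₂) / ε)) ∂ν :=
      (integral_sub (hintN x₁) (hintN x₂)).symm
    rw [heq]
    calc |∫ p, (K ((p.1 - x₁) / ε) - K ((p.1 - x₂) / ε)) ∂ν|
        ≤ ∫ p, |K ((p.1 - x₁) / ε) - K ((p.1 - x₂) / ε)| ∂ν := by
          simpa [Real.norm_eq_abs] using
            norm_integral_le_integral_norm (fun p : ℝ × ℝ => K ((p.1 - x₁) / ε) - K ((p.1 - x₂) / ε)) (μ := ν)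
      _ ≤ ∫ _p, L_K / ε * |x₁ - x₂| ∂ν :=
          integral_mono ((hintN x₁).sub (hintN x₂)).abs (integrable_const _)
            fun p => hK_pt _ _ _
      _ = L_K / ε * |x₁ - x₂| := by simp
  have hDn_lip : ∀ x₁ x₂, |Dn x₁ - Dn x₂| ≤ L_K / ε * M₁ * |x₁ - x₂| := by
    intro x₁ x₂
    have heq : Dn x₁ - Dn x₂ =
        ∫ p, (p.2 * K ((p.1 - x₁) / ε) - p.2 * K ((p.1 - x₂) / ε)) ∂ν :=
      (integral_sub (hintD x₁) (hintD x₂)).symm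
    rw [heq]
    calc |∫ p, (p.2 * K ((p.1 - x₁) / ε) - p.2 * K ((p.1 - x₂) / ε)) ∂ν|
        ≤ ∫ p, |p.2 * K ((p.1 - x₁) / ε) - p.2 * K ((p.1 - x₂) / ε)| ∂ν := by
          simpa [Real.norm_eq_abs] using
            norm_integral_le_integral_norm (fun p : ℝ × ℝ => p.2 * K ((p.1 - x₁) / ε) - p.2 * K ((p.1 - x₂) / ε)) (μ := ν)
      _ ≤ ∫ p, (L_K / ε * |x₁ - x₂|) * p.2 ∂ν := by
          refine integral_mono_ae ((hintD x₁).sub (hintD x₂)).abs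
            ((hint.const_mul _)) (hsupp.mono fun p hp => ?_)
          dsimp only
          rw [← mul_sub, abs_mul, abs_of_nonneg hp]
          calc p.2 * |K ((p.1 - x₁) / ε) - K ((p.1 - x₂) / ε)|
              ≤ p.2 * (L_K / ε * |x₁ - x₂|) :=
                mul_le_mul_of_nonneg_left (hK_pt _ _ _) hp
            _ = (L_K / ε * |x₁ - x₂|) * p.2 := mul_comm _ _
      _ = L_K / ε * M₁ * |x₁ - x₂| := by
          rw [integral_const_mul, ← hM₁]; ring
  -- bounds for F
  have hden_pos : ∀ x, 0 < Dn x + δ := fun x => by linarith [hDn_nonneg x]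
  have hF_eq : ∀ x, Fratio ε δ K ν x = (N x + δ) / (Dn x + δ) := fun x => rfl
  set Fm : ℝ := (A₂ + δ) / δ with hFm
  have hFm_pos : 0 < Fm := div_pos (by linarith) hδ
  have hF_nonneg : ∀ x, 0 ≤ Fratio ε δ K ν x := fun x => by
    rw [hF_eq]
    exact div_nonneg (by linarith [hN_nonneg x]) (le_of_lt (hden_pos x))
  have hF_le : ∀ x, Fratio ε δ K ν x ≤ Fm := fun x => by
    rw [hF_eq, hFm]
    apply div_le_div₀ (by linarith) (by linarith [hN_le x]) hδ (by linarith [hDn_nonneg x])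
  set C_F : ℝ := (L_K / ε * (A₂ * M₁ + δ) + (A₂ + δ) * (L_K / ε * M₁)) / δ ^ 2 with hCF
  have hCF_nonneg : 0 ≤ C_F := by
    apply div_nonneg _ (by positivity)
    have h1 : 0 ≤ L_K / ε := le_of_lt (div_pos hLK hε)
    have h2 : 0 ≤ L_K / ε * (A₂ * M₁ + δ) :=
      mul_nonneg h1 (by nlinarith)
    have h3 : 0 ≤ (A₂ + δ) * (L_K / ε * M₁) :=
      mul_nonneg (by linarith) (mul_nonneg h1 hM₁_nonneg)
    linarith
  have hF_lip : ∀ x₁ x₂, |Fratio ε δ K ν x₁ - Fratio ε δ K ν x₂| ≤ C_F * |x₁ - x₂| := by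
    intro x₁ x₂
    rw [hF_eq, hF_eq, div_sub_div _ _ (ne_of_gt (hden_pos x₁)) (ne_of_gt (hden_pos x₂))]
    rw [abs_div]
    have hnum : (N x₁ + δ) * (Dn x₂ + δ) - (Dn x₁ + δ) * (N x₂ + δ)
        = (N x₁ - N x₂) * (Dn x₂ + δ) + (N x₂ + δ) * (Dn x₂ - Dn x₁) := by ring
    have hnum_le : |(N x₁ + δ) * (Dn x₂ + δ) - (Dn x₁ + δ) * (N x₂ + δ)|
        ≤ (L_K / ε * (A₂ * M₁ + δ) + (A₂ + δ) * (L_K / ε * M₁)) * |x₁ - x₂| := by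
      rw [hnum]
      calc |(N x₁ - N x₂) * (Dn x₂ + δ) + (N x₂ + δ) * (Dn x₂ - Dn x₁)|
          ≤ |(N x₁ - N x₂) * (Dn x₂ + δ)| + |(N x₂ + δ) * (Dn x₂ - Dn x₁)| :=
            abs_add_le _ _
        _ = |N x₁ - N x₂| * |Dn x₂ + δ| + |N x₂ + δ| * |Dn x₂ - Dn x₁| := by
            rw [abs_mul, abs_mul]
        _ ≤ (L_K / ε * |x₁ - x₂|) * (A₂ * M₁ + δ)
              + (A₂ + δ) * (L_K / ε * M₁ * |x₁ - x₂|) := by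
            have h1 := hN_lip x₁ x₂
            have h2 : |Dn x₂ - Dn x₁| ≤ L_K / ε * M₁ * |x₁ - x₂| := by
              rw [abs_sub_comm]; exact hDn_lip x₁ x₂
            have h3 : |Dn x₂ + δ| ≤ A₂ * M₁ + δ := by
              rw [abs_of_pos (hden_pos x₂)]; linarith [hDn_le x₂]
            have h4 : |N x₂ + δ| ≤ A₂ + δ := by
              rw [abs_of_pos (by linarith [hN_nonneg x₂])]; linarith [hN_le x₂]
            have hd2 : 0 ≤ |Dn x₂ + δ| := abs_nonneg _
            gcongr
        _ = (L_K / ε * (A₂ * M₁ + δ) + (A₂ + δ) * (L_K / ε * M₁)) * |x₁ - x₂| := by ring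
    have hden_ge : δ ^ 2 ≤ |(Dn x₁ + δ) * (Dn x₂ + δ)| := by
      rw [abs_of_pos (mul_pos (hden_pos x₁) (hden_pos x₂))]
      calc δ ^ 2 = δ * δ := sq δ
        _ ≤ (Dn x₁ + δ) * (Dn x₂ + δ) := by
            apply mul_le_mul (by linarith [hDn_nonneg x₁]) (by linarith [hDn_nonneg x₂])
              hδ.le (by linarith [hDn_nonneg x₁])
    calc |(N x₁ + δ) * (Dn x₂ + δ) - (Dn x₁ + δ) * (N x₂ + δ)| / |(Dn x₁ + δ) * (Dn x₂ + δ)|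
        ≤ ((L_K / ε * (A₂ * M₁ + δ) + (A₂ + δ) * (L_K / ε * M₁)) * |x₁ - x₂|) / δ ^ 2 := by
          apply div_le_div₀ (by positivity) hnum_le (by positivity) hden_ge
          -- positivity for the numerator bound
      _ = C_F * |x₁ - x₂| := by rw [hCF]; ring
  -- the Lipschitz constant
  refine ⟨A₁ * L_Dup * Fm + 1 / 2 * A₁ ^ 2 * C_F, by positivity, ?_⟩
  intro t₁ t₂ x₁ x₂
  set s : ℝ := |t₁ - t₂| ^ ((1 : ℝ) / 2) + |x₁ - x₂| with hs
  have hs_nonneg : 0 ≤ s := add_nonneg (Real.rpow_nonneg (abs_nonneg _) _) (abs_nonneg _)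
  have hx_le_s : |x₁ - x₂| ≤ s := by
    rw [hs]
    have := Real.rpow_nonneg (abs_nonneg (t₁ - t₂)) ((1 : ℝ) / 2)
    linarith
  have hbeta : betaT ε δ K D t₁ x₁ ν - betaT ε δ K D t₂ x₂ ν
      = -(1 / 2) * ((D t₁ x₁ ^ 2 - D t₂ x₂ ^ 2) * Fratio ε δ K ν x₁
          + D t₂ x₂ ^ 2 * (Fratio ε δ K ν x₁ - Fratio ε δ K ν x₂)) := by
    simp only [betaT]; ring
  rw [hbeta]
  have hDsq : |D t₁ x₁ ^ 2 - D t₂ x₂ ^ 2| ≤ 2 * A₁ * (L_Dup * s) := by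
    have h1 : D t₁ x₁ ^ 2 - D t₂ x₂ ^ 2 = (D t₁ x₁ - D t₂ x₂) * (D t₁ x₁ + D t₂ x₂) := by
      ring
    rw [h1, abs_mul]
    have h2 : |D t₁ x₁ + D t₂ x₂| ≤ 2 * A₁ := by
      calc |D t₁ x₁ + D t₂ x₂| ≤ |D t₁ x₁| + |D t₂ x₂| := abs_add_le _ _
        _ ≤ 2 * A₁ := by linarith [hD_bdd t₁ x₁, hD_bdd t₂ x₂]
    calc |D t₁ x₁ - D t₂ x₂| * |D t₁ x₁ + D t₂ x₂|
        ≤ (L_Dup * s) * (2 * A₁) := by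
          apply mul_le_mul (hD_lip t₁ x₁ t₂ x₂) h2 (abs_nonneg _)
          positivity
      _ = 2 * A₁ * (L_Dup * s) := by ring
  have hDsq_bdd : D t₂ x₂ ^ 2 ≤ A₁ ^ 2 := by
    have := hD_bdd t₂ x₂
    nlinarith [abs_nonneg (D t₂ x₂), sq_abs (D t₂ x₂)]
  calc |(-(1 / 2)) * ((D t₁ x₁ ^ 2 - D t₂ x₂ ^ 2) * Fratio ε δ K ν x₁
          + D t₂ x₂ ^ 2 * (Fratio ε δ K ν x₁ - Fratio ε δ K ν x₂))|
      = 1 / 2 * |(D t₁ x₁ ^ 2 - D t₂ x₂ ^ 2) * Fratio ε δ K ν x₁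
          + D t₂ x₂ ^ 2 * (Fratio ε δ K ν x₁ - Fratio ε δ K ν x₂)| := by
        rw [abs_mul]; norm_num
    _ ≤ 1 / 2 * (|(D t₁ x₁ ^ 2 - D t₂ x₂ ^ 2) * Fratio ε δ K ν x₁|
          + |D t₂ x₂ ^ 2 * (Fratio ε δ K ν x₁ - Fratio ε δ K ν x₂)|) := by
        gcongr; exact abs_add_le _ _
    _ ≤ 1 / 2 * ((2 * A₁ * (L_Dup * s)) * Fm + A₁ ^ 2 * (C_F * |x₁ - x₂|)) := by
        gcongr 1 / 2 * (?_ + ?_)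
        · rw [abs_mul]
          apply mul_le_mul hDsq _ (abs_nonneg _) (by positivity)
          rw [abs_of_nonneg (hF_nonneg x₁)]
          exact hF_le x₁
        · rw [abs_mul, abs_of_nonneg (sq_nonneg (D t₂ x₂))]
          exact mul_le_mul hDsq_bdd (hF_lip x₁ x₂) (abs_nonneg _) (by positivity)
    _ ≤ 1 / 2 * ((2 * A₁ * (L_Dup * s)) * Fm + A₁ ^ 2 * (C_F * s)) := by
        gcongr
    _ = (A₁ * L_Dup * Fm + 1 / 2 * A₁ ^ 2 * C_F) * s := by ring
end

section
/- The coefficient σ̃ is Lipschitz in the measure argument along couplings: for every M > 0 there exists a constant C > 0, depending only on ε, δ, A₁, A₂, L_K and M, such that whenever ‖V‖₂ ≤ M and ‖V'‖₂ ≤ M, for all t, x ∈ ℝ: |σ̃(t,x,law(X,V)) − σ̃(t,x,law(X',V'))| ≤ C·(‖X−X'‖₂ + ‖V−V'‖₂). -/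
open MeasureTheory

/-- `‖ξ‖₂ = (E[ξ²])^{1/2}`. -/
noncomputable def l2norm {Ω : Type*} [MeasurableSpace Ω] (μ : Measure Ω) (f : Ω → ℝ) : ℝ :=
  Real.sqrt (∫ ω, (f ω) ^ 2 ∂μ)

lemma l2norm_nonneg {Ω : Type*} [MeasurableSpace Ω] (μ : Measure Ω) (f : Ω → ℝ) :
    0 ≤ l2norm μ f := Real.sqrt_nonneg _

/-- Cauchy–Schwarz for nonnegative functions. -/
lemma myCS {Ω : Type*} [MeasurableSpace Ω] (μ : Measure Ω) [IsProbabilityMeasure μ]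
    {f g : Ω → ℝ} (hf0 : ∀ ω, 0 ≤ f ω) (hg0 : ∀ ω, 0 ≤ g ω)
    (hf : MemLp f 2 μ) (hg : MemLp g 2 μ) :
    ∫ ω, f ω * g ω ∂μ ≤ l2norm μ f * l2norm μ g := by
  have hconj : Real.HolderConjugate 2 2 := ⟨by norm_num, by norm_num, by norm_num⟩
  have h2 : (ENNReal.ofReal 2) = (2 : ENNReal) := by
    simp [ENNReal.ofReal_ofNat]
  have := integral_mul_le_Lp_mul_Lq_of_nonneg hconj
    (Filter.Eventually.of_forall hf0) (Filter.Eventually.of_forall hg0)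
    (h2 ▸ hf) (h2 ▸ hg)
  calc ∫ ω, f ω * g ω ∂μ
      ≤ (∫ a, f a ^ (2:ℝ) ∂μ) ^ ((1:ℝ)/2) * (∫ a, g a ^ (2:ℝ) ∂μ) ^ ((1:ℝ)/2) := this
    _ = l2norm μ f * l2norm μ g := by
        rw [l2norm, l2norm, Real.sqrt_eq_rpow, Real.sqrt_eq_rpow]
        norm_num [Real.rpow_two]

/-- Local Lipschitz bound for `Real.sqrt` away from zero. -/
lemma sqrt_lip {a b c : ℝ} (hc : 0 < c) (ha : c ≤ a) (hb : c ≤ b) :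
    |Real.sqrt a - Real.sqrt b| ≤ |a - b| / (2 * Real.sqrt c) := by
  have ha0 : 0 ≤ a := hc.le.trans ha
  have hb0 : 0 ≤ b := hc.le.trans hb
  have hsum : 2 * Real.sqrt c ≤ Real.sqrt a + Real.sqrt b := by
    have := Real.sqrt_le_sqrt ha
    have := Real.sqrt_le_sqrt hb
    linarith
  have hpos : 0 < 2 * Real.sqrt c := by positivity
  have key : |Real.sqrt a - Real.sqrt b| * (Real.sqrt a + Real.sqrt b) = |a - b| := by
    rw [← abs_of_nonneg (by positivity : (0:ℝ) ≤ Real.sqrt a + Real.sqrt b), ← abs_mul]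
    congr 1
    have : (Real.sqrt a - Real.sqrt b) * (Real.sqrt a + Real.sqrt b)
        = Real.sqrt a ^ 2 - Real.sqrt b ^ 2 := by ring
    rw [this, Real.sq_sqrt ha0, Real.sq_sqrt hb0]
  rw [le_div_iff₀ hpos, ← key]
  exact mul_le_mul_of_nonneg_left hsum (abs_nonneg _)

/-- Product of two L² functions is integrable. -/
lemma myIntMul {Ω : Type*} [MeasurableSpace Ω] {μ : Measure Ω}
    {f g : Ω → ℝ} (hf : MemLp f 2 μ) (hg : MemLp g 2 μ) :
    Integrable (fun ω => f ω * g ω) μ := by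
  refine Integrable.mono' ((hf.integrable_sq.add hg.integrable_sq).div_const 2)
    (hf.1.mul hg.1) (Filter.Eventually.of_forall fun ω => ?_)
  have h := sq_nonneg (|f ω| - |g ω|)
  have h1 := sq_abs (f ω)
  have h2 := sq_abs (g ω)
  have h3 : ((fun x => f x ^ 2) + fun x => g x ^ 2) ω = f ω ^ 2 + g ω ^ 2 := rfl
  rw [Real.norm_eq_abs, abs_mul, h3]
  nlinarith [abs_nonneg (f ω), abs_nonneg (g ω)]

/-- E[|f|] ≤ ‖f‖₂ on a probability space. -/
lemma myL1L2 {Ω : Type*} [MeasurableSpace Ω] (μ : Measure Ω) [IsProbabilityMeasure μ]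
    {f : Ω → ℝ} (hf : MemLp f 2 μ) :
    ∫ ω, |f ω| ∂μ ≤ l2norm μ f := by
  have h1 : MemLp (fun _ : Ω => (1:ℝ)) 2 μ := memLp_const 1
  have hone : l2norm μ (fun _ : Ω => (1:ℝ)) = 1 := by
    simp [l2norm]
  calc ∫ ω, |f ω| ∂μ = ∫ ω, |f ω| * 1 ∂μ := by simp
    _ ≤ l2norm μ (fun ω => |f ω|) * l2norm μ (fun _ => (1:ℝ)) :=
        myCS μ (fun ω => abs_nonneg _) (fun _ => zero_le_one) hf.abs h1
    _ = l2norm μ f := by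
        rw [hone, mul_one]
        simp [l2norm, sq_abs]

set_option maxHeartbeats 1000000 in
/-- `σ̃` is Lipschitz in the measure argument along couplings, with a
constant depending only on `ε, δ, A₁, A₂, L_K` and the moment bound `M`. -/
theorem stmt_8 (ε δ A₁ A₂ L_K L_Dup : ℝ) (hε : 0 < ε) (hδ : 0 < δ)
    (hA₁ : 0 < A₁) (hA₂ : 0 < A₂) (hLK : 0 < L_K) (hLDup : 0 < L_Dup)
    (K : ℝ → ℝ) (hK_nonneg : ∀ u, 0 ≤ K u) (hK_bdd : ∀ u, K u ≤ A₂)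
    (hK_lip : ∀ u u', |K u - K u'| ≤ L_K * |u - u'|)
    (D : ℝ → ℝ → ℝ) (hD_bdd : ∀ t x, |D t x| ≤ A₁)
    (hD_lip : ∀ t₁ x₁ t₂ x₂,
      |D t₁ x₁ - D t₂ x₂| ≤ L_Dup * (|t₁ - t₂| ^ ((1 : ℝ) / 2) + |x₁ - x₂|)) :
    ∀ M : ℝ, 0 < M → ∃ C : ℝ, 0 < C ∧
      ∀ (Ω : Type) (_ : MeasurableSpace Ω) (μ : Measure Ω), IsProbabilityMeasure μ →
        ∀ (X V X' V' : Ω → ℝ),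
          Measurable X → Measurable V → Measurable X' → Measurable V' →
          (∀ ω, 0 ≤ V ω) → (∀ ω, 0 ≤ V' ω) →
          MemLp X 2 μ → MemLp V 2 μ → MemLp X' 2 μ → MemLp V' 2 μ →
          l2norm μ V ≤ M → l2norm μ V' ≤ M →
          ∀ t x : ℝ,
            |sigmaT ε δ K D t x (Measure.map (fun ω => (X ω, V ω)) μ) -
              sigmaT ε δ K D t x (Measure.map (fun ω => (X' ω, V' ω)) μ)| ≤
              C * (l2norm μ (fun ω => X ω - X' ω) + l2norm μ (fun ω => V ω - V' ω)) := by
  intro M hM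
  -- continuity of K
  have hKlip : LipschitzWith (Real.toNNReal L_K) K := by
    refine LipschitzWith.of_dist_le_mul fun u u' => ?_
    rw [Real.dist_eq, Real.dist_eq, Real.coe_toNNReal _ hLK.le]
    exact hK_lip u u'
  have hKcont : Continuous K := hKlip.continuous
  set B : ℝ := A₂ * M + δ with hB
  have hBpos : 0 < B := by positivity
  set c : ℝ := δ / B with hc
  have hcpos : 0 < c := by positivity
  set C₁ : ℝ := L_K / ε / δ + (A₂ + δ) / δ ^ 2 * (L_K / ε * M + A₂) with hC₁
  have hC₁pos : 0 < C₁ := by positivity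
  refine ⟨A₁ * C₁ / (2 * Real.sqrt c), by positivity, ?_⟩
  intro Ω mΩ μ hμ X V X' V' hX hV hX' hV' hV0 hV'0 hX2 hV2 hX'2 hV'2 hVM hV'M t x
  -- abbreviations
  set a : ℝ := l2norm μ (fun ω => X ω - X' ω) with ha
  set b : ℝ := l2norm μ (fun ω => V ω - V' ω) with hb
  have ha0 : 0 ≤ a := l2norm_nonneg _ _
  have hb0 : 0 ≤ b := l2norm_nonneg _ _
  -- the integrands
  set g1 : Ω → ℝ := fun ω => K ((X ω - x) / ε) with hg1
  set g1' : Ω → ℝ := fun ω => K ((X' ω - x) / ε) with hg1'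
  have hg1meas : Measurable g1 := hKcont.measurable.comp ((hX.sub_const x).div_const ε)
  have hg1'meas : Measurable g1' := hKcont.measurable.comp ((hX'.sub_const x).div_const ε)
  -- pushforward integrals
  have hcont1 : Continuous (fun p : ℝ × ℝ => K ((p.1 - x) / ε)) :=
    hKcont.comp ((continuous_fst.sub continuous_const).div_const ε)
  have hcont2 : Continuous (fun p : ℝ × ℝ => p.2 * K ((p.1 - x) / ε)) :=
    continuous_snd.mul hcont1
  have hmap1 : ∫ p, K ((p.1 - x) / ε) ∂(Measure.map (fun ω => (X ω, V ω)) μ)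
      = ∫ ω, g1 ω ∂μ :=
    integral_map (hX.prodMk hV).aemeasurable hcont1.aestronglyMeasurable
  have hmap1' : ∫ p, K ((p.1 - x) / ε) ∂(Measure.map (fun ω => (X' ω, V' ω)) μ)
      = ∫ ω, g1' ω ∂μ :=
    integral_map (hX'.prodMk hV').aemeasurable hcont1.aestronglyMeasurable
  have hmap2 : ∫ p, p.2 * K ((p.1 - x) / ε) ∂(Measure.map (fun ω => (X ω, V ω)) μ)
      = ∫ ω, V ω * g1 ω ∂μ :=
    integral_map (hX.prodMk hV).aemeasurable hcont2.aestronglyMeasurable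
  have hmap2' : ∫ p, p.2 * K ((p.1 - x) / ε) ∂(Measure.map (fun ω => (X' ω, V' ω)) μ)
      = ∫ ω, V' ω * g1' ω ∂μ :=
    integral_map (hX'.prodMk hV').aemeasurable hcont2.aestronglyMeasurable
  -- integrability
  have hIg1 : Integrable g1 μ := by
    refine Integrable.mono' (integrable_const A₂) hg1meas.aestronglyMeasurable
      (Filter.Eventually.of_forall fun ω => ?_)
    rw [Real.norm_eq_abs, abs_of_nonneg (hK_nonneg _)]
    exact hK_bdd _
  have hIg1' : Integrable g1' μ := by
    refine Integrable.mono' (integrable_const A₂) hg1'meas.aestronglyMeasurable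
      (Filter.Eventually.of_forall fun ω => ?_)
    rw [Real.norm_eq_abs, abs_of_nonneg (hK_nonneg _)]
    exact hK_bdd _
  have hIV : Integrable V μ := by
    rw [← memLp_one_iff_integrable]
    exact hV2.mono_exponent (by norm_num)
  have hIV' : Integrable V' μ := by
    rw [← memLp_one_iff_integrable]
    exact hV'2.mono_exponent (by norm_num)
  have hIg2 : Integrable (fun ω => V ω * g1 ω) μ := by
    refine Integrable.mono' (hIV.const_mul A₂) (hV.mul hg1meas).aestronglyMeasurable
      (Filter.Eventually.of_forall fun ω => ?_)
    rw [Real.norm_eq_abs, abs_of_nonneg (mul_nonneg (hV0 ω) (hK_nonneg _))]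
    calc V ω * g1 ω ≤ V ω * A₂ := mul_le_mul_of_nonneg_left (hK_bdd _) (hV0 ω)
      _ = A₂ * V ω := mul_comm _ _
  have hIg2' : Integrable (fun ω => V' ω * g1' ω) μ := by
    refine Integrable.mono' (hIV'.const_mul A₂) (hV'.mul hg1'meas).aestronglyMeasurable
      (Filter.Eventually.of_forall fun ω => ?_)
    rw [Real.norm_eq_abs, abs_of_nonneg (mul_nonneg (hV'0 ω) (hK_nonneg _))]
    calc V' ω * g1' ω ≤ V' ω * A₂ := mul_le_mul_of_nonneg_left (hK_bdd _) (hV'0 ω)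
      _ = A₂ * V' ω := mul_comm _ _
  -- key pointwise Lipschitz bound for g1
  have hg1lip : ∀ ω, |g1 ω - g1' ω| ≤ L_K / ε * |X ω - X' ω| := fun ω => by
    calc |g1 ω - g1' ω| ≤ L_K * |(X ω - x) / ε - (X' ω - x) / ε| := hK_lip _ _
      _ = L_K / ε * |X ω - X' ω| := by
          rw [show (X ω - x) / ε - (X' ω - x) / ε = (X ω - X' ω) / ε by ring,
            abs_div, abs_of_pos hε]
          ring
  -- numerator and denominator values
  set I1 : ℝ := ∫ ω, g1 ω ∂μ with hI1
  set I1' : ℝ := ∫ ω, g1' ω ∂μ with hI1'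
  set I2 : ℝ := ∫ ω, V ω * g1 ω ∂μ with hI2
  set I2' : ℝ := ∫ ω, V' ω * g1' ω ∂μ with hI2'
  -- basic bounds
  have hI1nn : 0 ≤ I1 := integral_nonneg fun ω => hK_nonneg _
  have hI1'nn : 0 ≤ I1' := integral_nonneg fun ω => hK_nonneg _
  have hI1le : I1 ≤ A₂ := by
    calc I1 ≤ ∫ _, A₂ ∂μ := integral_mono hIg1 (integrable_const A₂) fun ω => hK_bdd _
      _ = A₂ := by simp
  have hI1'le : I1' ≤ A₂ := by
    calc I1' ≤ ∫ _, A₂ ∂μ := integral_mono hIg1' (integrable_const A₂) fun ω => hK_bdd _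
      _ = A₂ := by simp
  have hI2nn : 0 ≤ I2 := integral_nonneg fun ω => mul_nonneg (hV0 ω) (hK_nonneg _)
  have hI2'nn : 0 ≤ I2' := integral_nonneg fun ω => mul_nonneg (hV'0 ω) (hK_nonneg _)
  have hEV : ∫ ω, V ω ∂μ ≤ M := by
    calc ∫ ω, V ω ∂μ = ∫ ω, |V ω| ∂μ := by
          refine integral_congr_ae (Filter.Eventually.of_forall fun ω => ?_)
          exact (abs_of_nonneg (hV0 ω)).symm
      _ ≤ l2norm μ V := myL1L2 μ hV2
      _ ≤ M := hVM
  have hEV' : ∫ ω, V' ω ∂μ ≤ M := by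
    calc ∫ ω, V' ω ∂μ = ∫ ω, |V' ω| ∂μ := by
          refine integral_congr_ae (Filter.Eventually.of_forall fun ω => ?_)
          exact (abs_of_nonneg (hV'0 ω)).symm
      _ ≤ l2norm μ V' := myL1L2 μ hV'2
      _ ≤ M := hV'M
  have hI2le : I2 ≤ A₂ * M := by
    calc I2 ≤ ∫ ω, A₂ * V ω ∂μ := by
          refine integral_mono hIg2 (hIV.const_mul A₂) fun ω => ?_
          calc V ω * g1 ω ≤ V ω * A₂ := mul_le_mul_of_nonneg_left (hK_bdd _) (hV0 ω)
            _ = A₂ * V ω := mul_comm _ _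
      _ = A₂ * ∫ ω, V ω ∂μ := integral_const_mul _ _
      _ ≤ A₂ * M := mul_le_mul_of_nonneg_left hEV hA₂.le
  have hI2'le : I2' ≤ A₂ * M := by
    calc I2' ≤ ∫ ω, A₂ * V' ω ∂μ := by
          refine integral_mono hIg2' (hIV'.const_mul A₂) fun ω => ?_
          calc V' ω * g1' ω ≤ V' ω * A₂ := mul_le_mul_of_nonneg_left (hK_bdd _) (hV'0 ω)
            _ = A₂ * V' ω := mul_comm _ _
      _ = A₂ * ∫ ω, V' ω ∂μ := integral_const_mul _ _
      _ ≤ A₂ * M := mul_le_mul_of_nonneg_left hEV' hA₂.le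
  -- L² data for differences
  have hΔX2 : MemLp (fun ω => X ω - X' ω) 2 μ := hX2.sub hX'2
  have hΔV2 : MemLp (fun ω => V ω - V' ω) 2 μ := hV2.sub hV'2
  have hIabsΔX : Integrable (fun ω => |X ω - X' ω|) μ := by
    rw [← memLp_one_iff_integrable]
    exact hΔX2.abs.mono_exponent (by norm_num)
  have hIabsΔV : Integrable (fun ω => |V ω - V' ω|) μ := by
    rw [← memLp_one_iff_integrable]
    exact hΔV2.abs.mono_exponent (by norm_num)
  have habsΔXa : ∫ ω, |X ω - X' ω| ∂μ ≤ a := myL1L2 μ hΔX2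
  have habsΔVb : ∫ ω, |V ω - V' ω| ∂μ ≤ b := myL1L2 μ hΔV2
  -- bound on numerator difference
  have hND : |I1 - I1'| ≤ L_K / ε * a := by
    calc |I1 - I1'| = |∫ ω, (g1 ω - g1' ω) ∂μ| := by rw [integral_sub hIg1 hIg1']
      _ ≤ ∫ ω, |g1 ω - g1' ω| ∂μ := by
          simpa [Real.norm_eq_abs] using norm_integral_le_integral_norm (fun ω => g1 ω - g1' ω)
      _ ≤ ∫ ω, L_K / ε * |X ω - X' ω| ∂μ := by
          refine integral_mono ((hIg1.sub hIg1').abs) (hIabsΔX.const_mul _) fun ω => hg1lip ω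
      _ = L_K / ε * ∫ ω, |X ω - X' ω| ∂μ := integral_const_mul _ _
      _ ≤ L_K / ε * a := mul_le_mul_of_nonneg_left habsΔXa (by positivity)
  -- bound on denominator difference
  have hVabsΔX : ∫ ω, V ω * |X ω - X' ω| ∂μ ≤ M * a := by
    calc ∫ ω, V ω * |X ω - X' ω| ∂μ
        ≤ l2norm μ V * l2norm μ (fun ω => |X ω - X' ω|) :=
          myCS μ hV0 (fun ω => abs_nonneg _) hV2 hΔX2.abs
      _ = l2norm μ V * a := by
          congr 1
          simp [l2norm, sq_abs, ha]
      _ ≤ M * a := mul_le_mul_of_nonneg_right hVM ha0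
  have hDD : |I2 - I2'| ≤ L_K / ε * M * a + A₂ * b := by
    have hptw : ∀ ω, |V ω * g1 ω - V' ω * g1' ω|
        ≤ V ω * (L_K / ε * |X ω - X' ω|) + A₂ * |V ω - V' ω| := fun ω => by
      have h1 : V ω * g1 ω - V' ω * g1' ω
          = V ω * (g1 ω - g1' ω) + (V ω - V' ω) * g1' ω := by ring
      calc |V ω * g1 ω - V' ω * g1' ω|
          ≤ |V ω * (g1 ω - g1' ω)| + |(V ω - V' ω) * g1' ω| := by
            rw [h1]; exact abs_add_le _ _
        _ = V ω * |g1 ω - g1' ω| + |V ω - V' ω| * g1' ω := by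
            rw [abs_mul, abs_mul, abs_of_nonneg (hV0 ω), abs_of_nonneg (hK_nonneg _)]
        _ ≤ V ω * (L_K / ε * |X ω - X' ω|) + A₂ * |V ω - V' ω| := by
            refine add_le_add (mul_le_mul_of_nonneg_left (hg1lip ω) (hV0 ω)) ?_
            calc |V ω - V' ω| * g1' ω ≤ |V ω - V' ω| * A₂ :=
                  mul_le_mul_of_nonneg_left (hK_bdd _) (abs_nonneg _)
              _ = A₂ * |V ω - V' ω| := mul_comm _ _
    have hIrhs : Integrable
        (fun ω => V ω * (L_K / ε * |X ω - X' ω|) + A₂ * |V ω - V' ω|) μ := by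
      refine Integrable.add ?_ (hIabsΔV.const_mul A₂)
      have := myIntMul hV2 hΔX2.abs
      have h : Integrable (fun ω => (L_K / ε) * (V ω * |X ω - X' ω|)) μ := by
        refine (this.const_mul (L_K / ε)).congr (Filter.Eventually.of_forall fun ω => ?_)
        simp only [Pi.abs_apply]
      refine h.congr (Filter.Eventually.of_forall fun ω => ?_)
      ring
    calc |I2 - I2'| = |∫ ω, (V ω * g1 ω - V' ω * g1' ω) ∂μ| := by
          rw [integral_sub hIg2 hIg2']
      _ ≤ ∫ ω, |V ω * g1 ω - V' ω * g1' ω| ∂μ := by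
          simpa [Real.norm_eq_abs] using
            norm_integral_le_integral_norm (fun ω => V ω * g1 ω - V' ω * g1' ω)
      _ ≤ ∫ ω, (V ω * (L_K / ε * |X ω - X' ω|) + A₂ * |V ω - V' ω|) ∂μ :=
          integral_mono ((hIg2.sub hIg2').abs) hIrhs hptw
      _ = (∫ ω, V ω * (L_K / ε * |X ω - X' ω|) ∂μ) + A₂ * ∫ ω, |V ω - V' ω| ∂μ := by
          rw [integral_add (by
            have := (myIntMul hV2 hΔX2.abs).const_mul (L_K / ε)
            exact this.congr (Filter.Eventually.of_forall fun ω => by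
              simp only [Pi.abs_apply]; ring))
            (hIabsΔV.const_mul A₂), integral_const_mul]
      _ ≤ L_K / ε * M * a + A₂ * b := by
          refine add_le_add ?_ (mul_le_mul_of_nonneg_left habsΔVb hA₂.le)
          have : ∫ ω, V ω * (L_K / ε * |X ω - X' ω|) ∂μ
              = L_K / ε * ∫ ω, V ω * |X ω - X' ω| ∂μ := by
            rw [← integral_const_mul]
            exact integral_congr_ae (Filter.Eventually.of_forall fun ω => by ring)
          rw [this]
          calc L_K / ε * ∫ ω, V ω * |X ω - X' ω| ∂μ ≤ L_K / ε * (M * a) :=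
                mul_le_mul_of_nonneg_left hVabsΔX (by positivity)
            _ = L_K / ε * M * a := by ring
  -- the ratios
  set N : ℝ := I1 + δ with hN
  set N' : ℝ := I1' + δ with hN'
  set Dn : ℝ := I2 + δ with hDn
  set Dn' : ℝ := I2' + δ with hDn'
  have hNge : δ ≤ N := by rw [hN]; linarith
  have hN'ge : δ ≤ N' := by rw [hN']; linarith
  have hNle : N ≤ A₂ + δ := by rw [hN]; linarith
  have hN'le : N' ≤ A₂ + δ := by rw [hN']; linarith
  have hDnge : δ ≤ Dn := by rw [hDn]; linarith
  have hDn'ge : δ ≤ Dn' := by rw [hDn']; linarith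
  have hDnle : Dn ≤ B := by rw [hDn, hB]; linarith
  have hDn'le : Dn' ≤ B := by rw [hDn', hB]; linarith
  have hDnpos : 0 < Dn := lt_of_lt_of_le hδ hDnge
  have hDn'pos : 0 < Dn' := lt_of_lt_of_le hδ hDn'ge
  -- F values
  have hFν : Fratio ε δ K (Measure.map (fun ω => (X ω, V ω)) μ) x = N / Dn := by
    rw [Fratio, hmap1, hmap2]
  have hFν' : Fratio ε δ K (Measure.map (fun ω => (X' ω, V' ω)) μ) x = N' / Dn' := by
    rw [Fratio, hmap1', hmap2']
  have hFge : c ≤ N / Dn := by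
    rw [hc]
    exact div_le_div₀ (le_trans hδ.le hNge) hNge hDnpos hDnle
  have hF'ge : c ≤ N' / Dn' := by
    rw [hc]
    exact div_le_div₀ (le_trans hδ.le hN'ge) hN'ge hDn'pos hDn'le
  -- bound on the difference of ratios
  have hFdiff : |N / Dn - N' / Dn'| ≤ |I1 - I1'| / δ + (A₂ + δ) * |I2 - I2'| / δ ^ 2 := by
    have heq : N / Dn - N' / Dn' = (N - N') / Dn + N' * (Dn' - Dn) / (Dn * Dn') := by
      field_simp
      ring
    rw [heq]
    refine (abs_add_le _ _).trans (add_le_add ?_ ?_)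
    · rw [abs_div, abs_of_pos hDnpos]
      have hNN : N - N' = I1 - I1' := by rw [hN, hN']; ring
      rw [hNN]
      exact div_le_div_of_nonneg_left (abs_nonneg _) hδ hDnge
    · rw [abs_div, abs_mul, abs_of_pos (mul_pos hDnpos hDn'pos),
        abs_of_nonneg (le_trans hδ.le hN'ge)]
      have hDD' : |Dn' - Dn| = |I2 - I2'| := by
        rw [hDn, hDn', abs_sub_comm]
        congr 1
        ring
      rw [hDD']
      refine div_le_div₀ (by positivity) ?_ (by positivity) ?_
      · exact mul_le_mul hN'le le_rfl (abs_nonneg _) (by positivity)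
      · calc δ ^ 2 = δ * δ := sq δ
          _ ≤ Dn * Dn' := mul_le_mul hDnge hDn'ge hδ.le hDnpos.le
  have hFbound : |N / Dn - N' / Dn'| ≤ C₁ * (a + b) := by
    have step : |I1 - I1'| / δ + (A₂ + δ) * |I2 - I2'| / δ ^ 2
        ≤ (L_K / ε * a) / δ + (A₂ + δ) * (L_K / ε * M * a + A₂ * b) / δ ^ 2 := by
      refine add_le_add (div_le_div₀ (by positivity) hND hδ le_rfl) ?_
      exact div_le_div₀ (by positivity)
        (mul_le_mul_of_nonneg_left hDD (by positivity)) (by positivity) le_rfl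
    refine hFdiff.trans (step.trans ?_)
    rw [hC₁]
    have h1 : 0 ≤ (A₂ + δ) / δ ^ 2 * A₂ * a := by positivity
    have h2 : 0 ≤ L_K / ε / δ * b := by positivity
    have h3 : 0 ≤ (A₂ + δ) / δ ^ 2 * (L_K / ε * M) * b := by positivity
    have e1 : (L_K / ε * a) / δ + (A₂ + δ) * (L_K / ε * M * a + A₂ * b) / δ ^ 2
        = (L_K / ε / δ) * a + ((A₂ + δ) / δ ^ 2 * (L_K / ε * M)) * a
          + ((A₂ + δ) / δ ^ 2 * A₂) * b := by
      field_simp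
      ring
    have e2 : (L_K / ε / δ + (A₂ + δ) / δ ^ 2 * (L_K / ε * M + A₂)) * (a + b)
        = (L_K / ε / δ) * a + ((A₂ + δ) / δ ^ 2 * (L_K / ε * M)) * a
          + ((A₂ + δ) / δ ^ 2 * A₂) * a + L_K / ε / δ * b
          + (A₂ + δ) / δ ^ 2 * (L_K / ε * M) * b + (A₂ + δ) / δ ^ 2 * A₂ * b := by
      ring
    rw [e1, e2]
    linarith [h1, h2, h3]
  -- conclusion
  have hsc : 0 < Real.sqrt c := Real.sqrt_pos.mpr hcpos
  rw [sigmaT, sigmaT, hFν, hFν', ← mul_sub, abs_mul]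
  calc |D t x| * |Real.sqrt (N / Dn) - Real.sqrt (N' / Dn')|
      ≤ A₁ * |Real.sqrt (N / Dn) - Real.sqrt (N' / Dn')| :=
        mul_le_mul_of_nonneg_right (hD_bdd t x) (abs_nonneg _)
    _ ≤ A₁ * (|N / Dn - N' / Dn'| / (2 * Real.sqrt c)) :=
        mul_le_mul_of_nonneg_left (sqrt_lip hcpos hFge hF'ge) hA₁.le
    _ ≤ A₁ * ((C₁ * (a + b)) / (2 * Real.sqrt c)) := by
        refine mul_le_mul_of_nonneg_left ?_ hA₁.le
        exact div_le_div_of_nonneg_right hFbound (by positivity)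
    _ = A₁ * C₁ / (2 * Real.sqrt c) * (a + b) := by ring
end

section
/- The coefficient β̃ is Lipschitz in the measure argument along couplings: for every M > 0 there exists a constant C > 0, depending only on ε, δ, A₁, A₂, L_K and M, such that whenever ‖V‖₂ ≤ M and ‖V'‖₂ ≤ M, for all t, x ∈ ℝ: |β̃(t,x,law(X,V)) − β̃(t,x,law(X',V'))| ≤ C·(‖X−X'‖₂ + ‖V−V'‖₂). -/
open MeasureTheory

lemma cs_aux {Ω : Type*} [MeasurableSpace Ω] {μ : Measure Ω} {f g : Ω → ℝ}
    (hf : MemLp f 2 μ) (hg : MemLp g 2 μ) :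
    ∫ ω, |f ω| * |g ω| ∂μ ≤ l2norm μ f * l2norm μ g := by
  have h2 : (2 : ℝ).HolderConjugate 2 := Real.HolderConjugate.two_two
  have hf' : MemLp f (ENNReal.ofReal 2) μ := by rwa [ENNReal.ofReal_ofNat]
  have hg' : MemLp g (ENNReal.ofReal 2) μ := by rwa [ENNReal.ofReal_ofNat]
  have h := integral_mul_norm_le_Lp_mul_Lq (μ := μ) h2 hf' hg'
  simp only [Real.norm_eq_abs] at h
  have hconv : ∀ h : Ω → ℝ, (∫ ω, |h ω| ^ (2 : ℝ) ∂μ) = ∫ ω, (h ω) ^ 2 ∂μ := by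
    intro h
    refine integral_congr_ae (Filter.Eventually.of_forall fun ω => ?_)
    show |h ω| ^ (2 : ℝ) = h ω ^ 2
    rw [show ((2 : ℝ)) = ((2 : ℕ) : ℝ) by norm_num, Real.rpow_natCast, sq_abs]
  rw [hconv, hconv] at h
  rw [l2norm, l2norm, Real.sqrt_eq_rpow, Real.sqrt_eq_rpow]
  exact h

lemma abs_int_le_l2 {Ω : Type*} [MeasurableSpace Ω] {μ : Measure Ω} [IsProbabilityMeasure μ]
    {f : Ω → ℝ} (hf : MemLp f 2 μ) : ∫ ω, |f ω| ∂μ ≤ l2norm μ f := by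
  have h1 : MemLp (fun _ : Ω => (1 : ℝ)) 2 μ := memLp_const 1
  have h := cs_aux hf h1
  simp only [abs_one, mul_one] at h
  have e2 : l2norm μ (fun _ : Ω => (1 : ℝ)) = 1 := by
    simp [l2norm]
  rwa [e2, mul_one] at h

set_option maxHeartbeats 1000000 in
/-- `β̃` is Lipschitz in the measure argument along couplings, with a
constant depending only on `ε, δ, A₁, A₂, L_K` and the moment bound `M`. -/
theorem stmt_9 (ε δ A₁ A₂ L_K L_Dup : ℝ) (hε : 0 < ε) (hδ : 0 < δ)
    (hA₁ : 0 < A₁) (hA₂ : 0 < A₂) (hLK : 0 < L_K) (hLDup : 0 < L_Dup)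
    (K : ℝ → ℝ) (hK_nonneg : ∀ u, 0 ≤ K u) (hK_bdd : ∀ u, K u ≤ A₂)
    (hK_lip : ∀ u u', |K u - K u'| ≤ L_K * |u - u'|)
    (D : ℝ → ℝ → ℝ) (hD_bdd : ∀ t x, |D t x| ≤ A₁)
    (hD_lip : ∀ t₁ x₁ t₂ x₂,
      |D t₁ x₁ - D t₂ x₂| ≤ L_Dup * (|t₁ - t₂| ^ ((1 : ℝ) / 2) + |x₁ - x₂|)) :
    ∀ M : ℝ, 0 < M → ∃ C : ℝ, 0 < C ∧
      ∀ (Ω : Type) (_ : MeasurableSpace Ω) (μ : Measure Ω), IsProbabilityMeasure μ →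
        ∀ (X V X' V' : Ω → ℝ),
          Measurable X → Measurable V → Measurable X' → Measurable V' →
          (∀ ω, 0 ≤ V ω) → (∀ ω, 0 ≤ V' ω) →
          MemLp X 2 μ → MemLp V 2 μ → MemLp X' 2 μ → MemLp V' 2 μ →
          l2norm μ V ≤ M → l2norm μ V' ≤ M →
          ∀ t x : ℝ,
            |betaT ε δ K D t x (Measure.map (fun ω => (X ω, V ω)) μ) -
              betaT ε δ K D t x (Measure.map (fun ω => (X' ω, V' ω)) μ)| ≤
              C * (l2norm μ (fun ω => X ω - X' ω) + l2norm μ (fun ω => V ω - V' ω)) := by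
  intro M hM
  set c₁ : ℝ := A₁ ^ 2 / 2 * (L_K / (ε * δ) + (A₂ + δ) * (L_K / ε * M) / δ ^ 2) with hc₁def
  set c₂ : ℝ := A₁ ^ 2 / 2 * ((A₂ + δ) * A₂ / δ ^ 2) with hc₂def
  have hc₁ : 0 < c₁ := by rw [hc₁def]; positivity
  have hc₂ : 0 < c₂ := by rw [hc₂def]; positivity
  refine ⟨c₁ + c₂ + 1, by linarith, ?_⟩
  intro Ω mΩ μ hμ X V X' V' hXm hVm hX'm hV'm hV0 hV'0 hX2 hV2 hX'2 hV'2 hVM hV'M t x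
  set a := l2norm μ (fun ω => X ω - X' ω) with ha_def
  set b := l2norm μ (fun ω => V ω - V' ω) with hb_def
  have ha0 : 0 ≤ a := Real.sqrt_nonneg _
  have hb0 : 0 ≤ b := Real.sqrt_nonneg _
  -- continuity / measurability of the kernel
  have hKcont : Continuous K := by
    have hl : LipschitzWith (Real.toNNReal L_K) K := by
      refine LipschitzWith.of_dist_le_mul fun u u' => ?_
      rw [Real.dist_eq, Real.dist_eq, Real.coe_toNNReal _ hLK.le]
      exact hK_lip u u'
    exact hl.continuous
  have hg1 : Continuous fun p : ℝ × ℝ => K ((p.1 - x) / ε) :=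
    hKcont.comp ((continuous_fst.sub continuous_const).div_const ε)
  have hg2 : Continuous fun p : ℝ × ℝ => p.2 * K ((p.1 - x) / ε) := continuous_snd.mul hg1
  set N := ∫ ω, K ((X ω - x) / ε) ∂μ with hN_def
  set N' := ∫ ω, K ((X' ω - x) / ε) ∂μ with hN'_def
  set DN := ∫ ω, V ω * K ((X ω - x) / ε) ∂μ with hDN_def
  set DN' := ∫ ω, V' ω * K ((X' ω - x) / ε) ∂μ with hDN'_def
  have e1 : ∫ p, K ((p.1 - x) / ε) ∂(Measure.map (fun ω => (X ω, V ω)) μ) = N :=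
    integral_map (hXm.prodMk hVm).aemeasurable hg1.aestronglyMeasurable
  have e1' : ∫ p, K ((p.1 - x) / ε) ∂(Measure.map (fun ω => (X' ω, V' ω)) μ) = N' :=
    integral_map (hX'm.prodMk hV'm).aemeasurable hg1.aestronglyMeasurable
  have e2 : ∫ p, p.2 * K ((p.1 - x) / ε) ∂(Measure.map (fun ω => (X ω, V ω)) μ) = DN :=
    integral_map (hXm.prodMk hVm).aemeasurable hg2.aestronglyMeasurable
  have e2' : ∫ p, p.2 * K ((p.1 - x) / ε) ∂(Measure.map (fun ω => (X' ω, V' ω)) μ) = DN' :=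
    integral_map (hX'm.prodMk hV'm).aemeasurable hg2.aestronglyMeasurable
  -- integrability
  have hmK : Measurable fun ω => K ((X ω - x) / ε) :=
    hKcont.measurable.comp ((hXm.sub measurable_const).div_const ε)
  have hmK' : Measurable fun ω => K ((X' ω - x) / ε) :=
    hKcont.measurable.comp ((hX'm.sub measurable_const).div_const ε)
  have hI1 : Integrable (fun ω => K ((X ω - x) / ε)) μ := by
    refine Integrable.mono' (integrable_const A₂) hmK.aestronglyMeasurable
      (Filter.Eventually.of_forall fun ω => ?_)
    rw [Real.norm_eq_abs, abs_of_nonneg (hK_nonneg _)]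
    exact hK_bdd _
  have hI1' : Integrable (fun ω => K ((X' ω - x) / ε)) μ := by
    refine Integrable.mono' (integrable_const A₂) hmK'.aestronglyMeasurable
      (Filter.Eventually.of_forall fun ω => ?_)
    rw [Real.norm_eq_abs, abs_of_nonneg (hK_nonneg _)]
    exact hK_bdd _
  have hVint : Integrable V μ := hV2.integrable one_le_two
  have hV'int : Integrable V' μ := hV'2.integrable one_le_two
  have hI2 : Integrable (fun ω => V ω * K ((X ω - x) / ε)) μ := by
    refine Integrable.mono' (hVint.abs.const_mul A₂)
      (hVm.aestronglyMeasurable.mul hmK.aestronglyMeasurable)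
      (Filter.Eventually.of_forall fun ω => ?_)
    rw [Real.norm_eq_abs, abs_mul, abs_of_nonneg (hK_nonneg _)]
    calc |V ω| * K ((X ω - x) / ε) ≤ |V ω| * A₂ :=
          mul_le_mul_of_nonneg_left (hK_bdd _) (abs_nonneg _)
      _ = A₂ * |V ω| := mul_comm _ _
  have hI2' : Integrable (fun ω => V' ω * K ((X' ω - x) / ε)) μ := by
    refine Integrable.mono' (hV'int.abs.const_mul A₂)
      (hV'm.aestronglyMeasurable.mul hmK'.aestronglyMeasurable)
      (Filter.Eventually.of_forall fun ω => ?_)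
    rw [Real.norm_eq_abs, abs_mul, abs_of_nonneg (hK_nonneg _)]
    calc |V' ω| * K ((X' ω - x) / ε) ≤ |V' ω| * A₂ :=
          mul_le_mul_of_nonneg_left (hK_bdd _) (abs_nonneg _)
      _ = A₂ * |V' ω| := mul_comm _ _
  -- Lipschitz estimate for the rescaled kernel
  have hKlip' : ∀ y y' : ℝ, |K ((y - x) / ε) - K ((y' - x) / ε)| ≤ L_K / ε * |y - y'| := by
    intro y y'
    have h := hK_lip ((y - x) / ε) ((y' - x) / ε)
    have hd : (y - x) / ε - (y' - x) / ε = (y - y') / ε := by ring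
    rw [hd, abs_div, abs_of_pos hε] at h
    refine h.trans (le_of_eq ?_)
    ring
  -- moment estimates
  have hXX'2 : MemLp (fun ω => X ω - X' ω) 2 μ := hX2.sub hX'2
  have hVV'2 : MemLp (fun ω => V ω - V' ω) 2 μ := hV2.sub hV'2
  have hXX'int : Integrable (fun ω => X ω - X' ω) μ := hXX'2.integrable one_le_two
  have hEX : ∫ ω, |X ω - X' ω| ∂μ ≤ a := abs_int_le_l2 hXX'2
  have hEV : ∫ ω, |V ω - V' ω| ∂μ ≤ b := abs_int_le_l2 hVV'2
  have hCS : ∫ ω, |V ω| * |X ω - X' ω| ∂μ ≤ M * a :=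
    (cs_aux hV2 hXX'2).trans (mul_le_mul_of_nonneg_right hVM ha0)
  -- bound on the numerator difference
  have hNb : |N - N'| ≤ L_K / ε * a := by
    rw [hN_def, hN'_def, ← integral_sub hI1 hI1']
    calc |∫ ω, (K ((X ω - x) / ε) - K ((X' ω - x) / ε)) ∂μ|
        ≤ ∫ ω, |K ((X ω - x) / ε) - K ((X' ω - x) / ε)| ∂μ := by
          simpa [Real.norm_eq_abs] using norm_integral_le_integral_norm (μ := μ)
            (f := fun ω => K ((X ω - x) / ε) - K ((X' ω - x) / ε))
      _ ≤ ∫ ω, L_K / ε * |X ω - X' ω| ∂μ :=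
          integral_mono (hI1.sub hI1').abs (hXX'int.abs.const_mul _) fun ω => hKlip' _ _
      _ = L_K / ε * ∫ ω, |X ω - X' ω| ∂μ := integral_const_mul _ _
      _ ≤ L_K / ε * a := mul_le_mul_of_nonneg_left hEX (by positivity)
  -- bound on the denominator difference
  have i1 : Integrable (fun ω => |V ω - V' ω|) μ := (hVV'2.integrable one_le_two).abs
  have i2 : Integrable (fun ω => V ω * (X ω - X' ω)) μ := by
    have h := (hXX'2.smul hV2 (r := 1)).integrable le_rfl
    exact h
  have i2' : Integrable (fun ω => |V ω| * |X ω - X' ω|) μ := by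
    simpa [abs_mul] using i2.abs
  have hDNb : |DN - DN'| ≤ A₂ * b + L_K / ε * (M * a) := by
    rw [hDN_def, hDN'_def, ← integral_sub hI2 hI2']
    have hptw : ∀ ω, |V ω * K ((X ω - x) / ε) - V' ω * K ((X' ω - x) / ε)|
        ≤ A₂ * |V ω - V' ω| + L_K / ε * (|V ω| * |X ω - X' ω|) := by
      intro ω
      have h1 : V ω * K ((X ω - x) / ε) - V' ω * K ((X' ω - x) / ε)
          = (V ω - V' ω) * K ((X' ω - x) / ε)
            + V ω * (K ((X ω - x) / ε) - K ((X' ω - x) / ε)) := by ring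
      have h2 : |(V ω - V' ω) * K ((X' ω - x) / ε)| ≤ A₂ * |V ω - V' ω| := by
        rw [abs_mul, abs_of_nonneg (hK_nonneg _), mul_comm]
        exact mul_le_mul_of_nonneg_right (hK_bdd _) (abs_nonneg _)
      have h3 : |V ω * (K ((X ω - x) / ε) - K ((X' ω - x) / ε))|
          ≤ L_K / ε * (|V ω| * |X ω - X' ω|) := by
        rw [abs_mul]
        calc |V ω| * |K ((X ω - x) / ε) - K ((X' ω - x) / ε)|
            ≤ |V ω| * (L_K / ε * |X ω - X' ω|) :=
              mul_le_mul_of_nonneg_left (hKlip' _ _) (abs_nonneg _)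
          _ = L_K / ε * (|V ω| * |X ω - X' ω|) := by ring
      rw [h1]
      exact (abs_add_le _ _).trans (add_le_add h2 h3)
    calc |∫ ω, (V ω * K ((X ω - x) / ε) - V' ω * K ((X' ω - x) / ε)) ∂μ|
        ≤ ∫ ω, |V ω * K ((X ω - x) / ε) - V' ω * K ((X' ω - x) / ε)| ∂μ := by
          simpa [Real.norm_eq_abs] using norm_integral_le_integral_norm (μ := μ)
            (f := fun ω => V ω * K ((X ω - x) / ε) - V' ω * K ((X' ω - x) / ε))
      _ ≤ ∫ ω, (A₂ * |V ω - V' ω| + L_K / ε * (|V ω| * |X ω - X' ω|)) ∂μ :=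
          integral_mono (hI2.sub hI2').abs
            ((i1.const_mul _).add (i2'.const_mul _)) fun ω => hptw ω
      _ = A₂ * (∫ ω, |V ω - V' ω| ∂μ) + L_K / ε * ∫ ω, |V ω| * |X ω - X' ω| ∂μ := by
          rw [integral_add (i1.const_mul _) (i2'.const_mul _), integral_const_mul,
            integral_const_mul]
      _ ≤ A₂ * b + L_K / ε * (M * a) :=
          add_le_add (mul_le_mul_of_nonneg_left hEV hA₂.le)
            (mul_le_mul_of_nonneg_left hCS (by positivity))
  -- bounds on the integrals themselves
  have hDN0 : 0 ≤ DN := integral_nonneg fun ω => mul_nonneg (hV0 ω) (hK_nonneg _)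
  have hDN'0 : 0 ≤ DN' := integral_nonneg fun ω => mul_nonneg (hV'0 ω) (hK_nonneg _)
  have hN'0 : 0 ≤ N' := integral_nonneg fun ω => hK_nonneg _
  have hN'le : N' ≤ A₂ := by
    calc N' ≤ ∫ _ω, A₂ ∂μ := integral_mono hI1' (integrable_const _) fun ω => hK_bdd _
      _ = A₂ := by simp
  -- bound on the difference of the two fractions
  have hb1 : (0 : ℝ) < DN + δ := by linarith
  have hd1 : (0 : ℝ) < DN' + δ := by linarith
  have hfrac : |(N + δ) / (DN + δ) - (N' + δ) / (DN' + δ)|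
      ≤ |N - N'| / δ + (A₂ + δ) * |DN - DN'| / δ ^ 2 := by
    rw [div_sub_div _ _ hb1.ne' hd1.ne', abs_div, abs_of_pos (mul_pos hb1 hd1)]
    have hnum : |(N + δ) * (DN' + δ) - (DN + δ) * (N' + δ)|
        ≤ |N - N'| * (DN' + δ) + (N' + δ) * |DN - DN'| := by
      have h1 : (N + δ) * (DN' + δ) - (DN + δ) * (N' + δ)
          = (N - N') * (DN' + δ) + (N' + δ) * (DN' - DN) := by ring
      rw [h1]
      refine (abs_add_le _ _).trans ?_
      rw [abs_mul, abs_mul, abs_of_pos hd1,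
        abs_of_nonneg (by linarith : (0 : ℝ) ≤ N' + δ), abs_sub_comm DN' DN]
    calc |(N + δ) * (DN' + δ) - (DN + δ) * (N' + δ)| / ((DN + δ) * (DN' + δ))
        ≤ (|N - N'| * (DN' + δ) + (N' + δ) * |DN - DN'|) / ((DN + δ) * (DN' + δ)) :=
          (div_le_div_iff_of_pos_right (mul_pos hb1 hd1)).mpr hnum
      _ = |N - N'| / (DN + δ) + (N' + δ) * |DN - DN'| / ((DN + δ) * (DN' + δ)) := by
          field_simp
      _ ≤ |N - N'| / δ + (A₂ + δ) * |DN - DN'| / δ ^ 2 := by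
          refine add_le_add ?_ ?_
          · exact div_le_div_of_nonneg_left (abs_nonneg _) hδ (by linarith)
          · refine div_le_div₀ (by positivity)
              (mul_le_mul_of_nonneg_right (by linarith) (abs_nonneg _)) (by positivity) ?_
            calc δ ^ 2 = δ * δ := sq δ
              _ ≤ (DN + δ) * (DN' + δ) :=
                mul_le_mul (by linarith) (by linarith) hδ.le (by linarith)
  -- final assembly
  have hDsq : D t x ^ 2 ≤ A₁ ^ 2 := by
    have h := hD_bdd t x
    nlinarith [abs_nonneg (D t x), sq_abs (D t x)]
  simp only [betaT, Fratio]
  rw [e1, e2, e1', e2']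
  have key : |(-(1 / 2) * D t x ^ 2 * ((N + δ) / (DN + δ)))
      - (-(1 / 2) * D t x ^ 2 * ((N' + δ) / (DN' + δ)))|
      = 1 / 2 * D t x ^ 2 * |(N + δ) / (DN + δ) - (N' + δ) / (DN' + δ)| := by
    rw [show (-(1 / 2) * D t x ^ 2 * ((N + δ) / (DN + δ)))
        - (-(1 / 2) * D t x ^ 2 * ((N' + δ) / (DN' + δ)))
        = (-(1 / 2) * D t x ^ 2) * ((N + δ) / (DN + δ) - (N' + δ) / (DN' + δ)) by ring,
      abs_mul, abs_of_nonpos (by nlinarith [sq_nonneg (D t x)] : -(1 / 2) * D t x ^ 2 ≤ 0)]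
    ring
  rw [key]
  calc 1 / 2 * D t x ^ 2 * |(N + δ) / (DN + δ) - (N' + δ) / (DN' + δ)|
      ≤ 1 / 2 * A₁ ^ 2 * (|N - N'| / δ + (A₂ + δ) * |DN - DN'| / δ ^ 2) := by
        refine mul_le_mul (by nlinarith) hfrac (abs_nonneg _) (by positivity)
    _ ≤ 1 / 2 * A₁ ^ 2 * ((L_K / ε * a) / δ + (A₂ + δ) * (A₂ * b + L_K / ε * (M * a)) / δ ^ 2) := by
        gcongr
    _ = c₁ * a + c₂ * b := by
        rw [hc₁def, hc₂def]
        field_simp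
        ring
    _ ≤ (c₁ + c₂ + 1) * a + (c₁ + c₂ + 1) * b :=
        add_le_add (mul_le_mul_of_nonneg_right (by linarith) ha0)
          (mul_le_mul_of_nonneg_right (by linarith) hb0)
    _ = (c₁ + c₂ + 1) * (a + b) := by ring
end
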